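/- arXiv:1511.07990 — 2 statements merged into one kernel-verified Lean document; each statement's English description precedes it below -/
import Mathlib

section
/- Every loose odd wheel is not t-perfect. -/
open Finset SimpleGraph

namespace TPerfection

variable {V : Type*}

/-- A stable (independent) set of vertices: pairwise non-adjacent. -/
def IsStableSet (G : SimpleGraph V) (S : Finset V) : Prop :=
  ∀ u ∈ S, ∀ v ∈ S, ¬ G.Adj u v

/-- STAB(G): convex hull of incidence vectors of stable sets. -/
def stabPolytope (G : SimpleGraph V) [Fintype V] [DecidableEq V] : Set (V → ℝ) :=
  convexHull ℝ { x | ∃ S : Finset V, IsStableSet G S ∧ x = fun v => if v ∈ S then (1 : ℝ) else 0 }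

/-- `c` is an induced (chordless) cycle of `G`. -/
def IsInducedCycle (G : SimpleGraph V) {u : V} (c : G.Walk u u) : Prop :=
  c.IsCycle ∧ ∀ x y : V, x ∈ c.support → y ∈ c.support → G.Adj x y → s(x, y) ∈ c.edges

def boxConstraints (x : V → ℝ) : Prop := ∀ v, 0 ≤ x v ∧ x v ≤ 1

def edgeConstraints (G : SimpleGraph V) (x : V → ℝ) : Prop :=
  ∀ u v : V, G.Adj u v → x u + x v ≤ 1

def cliqueConstraints (G : SimpleGraph V) (x : V → ℝ) : Prop :=
  ∀ K : Finset V, G.IsClique (K : Set V) → ∑ v ∈ K, x v ≤ 1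

def oddCycleConstraints [DecidableEq V] (G : SimpleGraph V) (x : V → ℝ) : Prop :=
  ∀ (u : V) (c : G.Walk u u), IsInducedCycle G c → Odd c.length →
    ∑ v ∈ c.support.toFinset, x v ≤ ((c.length : ℝ) - 1) / 2

/-- Solution set of box, edge and odd-cycle constraints. -/
def tPolytope (G : SimpleGraph V) [DecidableEq V] : Set (V → ℝ) :=
  { x | boxConstraints x ∧ edgeConstraints G x ∧ oddCycleConstraints G x }

/-- Solution set of box, clique and odd-cycle constraints. -/
def hPolytope (G : SimpleGraph V) [DecidableEq V] : Set (V → ℝ) :=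
  { x | boxConstraints x ∧ cliqueConstraints G x ∧ oddCycleConstraints G x }

/-- Solution set of box and clique constraints. -/
def qstabPolytope (G : SimpleGraph V) : Set (V → ℝ) :=
  { x | boxConstraints x ∧ cliqueConstraints G x }

def TPerfect (G : SimpleGraph V) [Fintype V] [DecidableEq V] : Prop :=
  tPolytope G = stabPolytope G

def HPerfect (G : SimpleGraph V) [Fintype V] [DecidableEq V] : Prop :=
  hPolytope G = stabPolytope G

/-- The clique number, as an extended natural number. -/
noncomputable def cliqueNumber (G : SimpleGraph V) : ℕ∞ :=
  sSup ((fun n : ℕ => (n : ℕ∞)) '' { n | ∃ K : Finset V, G.IsNClique n K })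

/-- A graph is perfect if every induced subgraph has chromatic number equal to
clique number. -/
def IsPerfect (G : SimpleGraph V) : Prop :=
  ∀ S : Set V, (G.induce S).chromaticNumber = cliqueNumber (G.induce S)

/-- `G` is a loose wheel with hub `hub` and rim `c`: `c` is a cycle, `hub` lies outside
of it and has at least three neighbours on it, and the rim together with the hub
comprise all vertices and edges of `G`. -/
structure IsLooseWheel (G : SimpleGraph V) (hub : V) {u : V} (c : G.Walk u u) : Prop where
  isCycle : c.IsCycle
  hub_not_mem : hub ∉ c.support
  spokes : ∃ w₁ w₂ w₃ : V, w₁ ∈ c.support ∧ w₂ ∈ c.support ∧ w₃ ∈ c.support ∧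
    w₁ ≠ w₂ ∧ w₁ ≠ w₃ ∧ w₂ ≠ w₃ ∧ G.Adj hub w₁ ∧ G.Adj hub w₂ ∧ G.Adj hub w₃
  vertex_cover : ∀ w : V, w ∈ c.support ∨ w = hub
  edge_cover : ∀ x y : V, G.Adj x y → s(x, y) ∈ c.edges ∨ x = hub ∨ y = hub

/-- A segment of a loose wheel: a path of the rim joining two neighbours of the hub
and containing no other neighbour of the hub. -/
def IsSegment (G : SimpleGraph V) (hub : V) {u : V} (c : G.Walk u u)
    {a b : V} (p : G.Walk a b) : Prop :=
  p.IsPath ∧ a ≠ b ∧ G.Adj hub a ∧ G.Adj hub b ∧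
    (∀ e ∈ p.edges, e ∈ c.edges) ∧
    (∀ w ∈ p.support, G.Adj hub w → w = a ∨ w = b)

/-- `G` is a loose odd wheel: a loose wheel with odd rim having at least three
(pairwise distinct, hence pairwise edge-disjoint) segments of odd length. -/
def IsLooseOddWheel [DecidableEq V] (G : SimpleGraph V) : Prop :=
  ∃ (hub u : V) (c : G.Walk u u), IsLooseWheel G hub c ∧ Odd c.length ∧
    ∃ (a₁ b₁ : V) (p₁ : G.Walk a₁ b₁) (a₂ b₂ : V) (p₂ : G.Walk a₂ b₂)
      (a₃ b₃ : V) (p₃ : G.Walk a₃ b₃),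
      IsSegment G hub c p₁ ∧ IsSegment G hub c p₂ ∧ IsSegment G hub c p₃ ∧
      Odd p₁.length ∧ Odd p₂.length ∧ Odd p₃.length ∧
      Disjoint p₁.edges.toFinset p₂.edges.toFinset ∧
      Disjoint p₁.edges.toFinset p₃.edges.toFinset ∧
      Disjoint p₂.edges.toFinset p₃.edges.toFinset

/-- The neighbourhood of `v` is a stable set. -/
def StableNeighborhood (G : SimpleGraph V) (v : V) : Prop :=
  ∀ x y : V, G.Adj v x → G.Adj v y → ¬ G.Adj x y

/-- The t-contraction of `G` at `v`: delete `{v} ∪ N(v)` and add a new vertex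
(`none`) adjacent exactly to the remaining vertices having a neighbour in `N(v)`. -/
def tContract (G : SimpleGraph V) (v : V) :
    SimpleGraph (Option { w : V // w ≠ v ∧ ¬ G.Adj v w }) where
  Adj x y :=
    match x, y with
    | none, none => False
    | none, some b => ∃ n, G.Adj v n ∧ G.Adj b.1 n
    | some a, none => ∃ n, G.Adj v n ∧ G.Adj a.1 n
    | some a, some b => G.Adj a.1 b.1
  symm := by
    constructor
    rintro (_ | a) (_ | b) h
    · exact h
    · exact h
    · exact h
    · exact h.symm
  loopless := by
    constructor
    rintro (_ | a) h
    · exact h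
    · exact G.irrefl h

/-- The wheel with hub `none` and rim the cycle of length `k` on `Fin k`. -/
def wheelGraph (k : ℕ) : SimpleGraph (Option (Fin k)) where
  Adj x y :=
    match x, y with
    | none, none => False
    | none, some _ => True
    | some _, none => True
    | some i, some j => i ≠ j ∧ ((i.1 + 1) % k = j.1 ∨ (j.1 + 1) % k = i.1)
  symm := by
    constructor
    rintro (_ | i) (_ | j) h
    · exact h
    · trivial
    · trivial
    · exact ⟨h.1.symm, h.2.symm⟩
  loopless := by
    constructor
    rintro (_ | i) h
    · exact h
    · exact h.1 rfl

/-- One step of t-contraction between (isomorphism classes of) graphs. -/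
def TContractStep : (Σ α : Type, SimpleGraph α) → (Σ α : Type, SimpleGraph α) → Prop :=
  fun G H => ∃ v : G.1, StableNeighborhood G.2 v ∧ Nonempty (H.2 ≃g tContract G.2 v)

end TPerfection

/-!
Let `k` be the length of the rim; give the hub weight `1/k` and every rim vertex weight
`(k-1)/(2k)`. All values are at most `1/2`, so the box and edge constraints hold. An odd cycle of
length `L` through the hub has slack `(L-3)/(2k)`; one avoiding the hub uses only rim edges, so it
runs around the whole rim and has slack `(L-k)/(2k)`. Hence the point lies in the t-polytope.
Its total weight is `1/k + (k-1)/2`, but a stable set has at most `(k-1)/2` vertices. Count rim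
edges: each rim vertex of a stable set covers two of them, and no edge is covered twice. Without
the hub this bounds a stable set of the odd rim by `(k-1)/2`. With the hub, both ends of every
segment are excluded, so on each of the three odd segments some edge is not covered at all, and
at most `(k-3)/2` rim vertices remain.
-/

lemma two_mul_card_add_card_le_card {α : Type*} [AddGroup α] [Fintype α] [DecidableEq α]
    {T J : Finset α} {a : α} (hT : ∀ i ∈ T, i + a ∉ T) (hJ : ∀ j ∈ J, j ∉ T ∧ j + a ∉ T) :
    2 * #T + #J ≤ Fintype.card α := by
  set T' := T.map (Equiv.subRight a).toEmbedding
  have hmem : ∀ {j}, j ∈ T' ↔ j + a ∈ T := by simp [T']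
  have hdisj : Disjoint T T' := disjoint_left.mpr fun i hi hi' => hT i hi (hmem.mp hi')
  have hdisjJ : Disjoint (T ∪ T') J := disjoint_right.mpr fun j hj h => by
    rcases mem_union.mp h with h | h
    exacts [(hJ j hj).1 h, (hJ j hj).2 (hmem.mp h)]
  calc 2 * #T + #J = #(T ∪ T' ∪ J) := by
        rw [card_union_of_disjoint hdisjJ, card_union_of_disjoint hdisj, card_map]; ring
    _ ≤ Fintype.card α := card_le_univ _

lemma ZMod.forall_of_add_one {n : ℕ} [NeZero n] {P : ZMod n → Prop} {a : ZMod n} (ha : P a)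
    (hstep : ∀ i, P i → P (i + 1)) (i : ZMod n) : P i := by
  have key : ∀ m : ℕ, P (a + m) := fun m => by
    induction m with
    | zero => simpa using ha
    | succ m ih => simpa [add_assoc] using hstep _ ih
  simpa using key (i - a).val

namespace SimpleGraph.Walk

variable {V : Type*} {G : SimpleGraph V} {u u' v : V}

def cycleVert (c : G.Walk u u) (i : ZMod c.length) : V := c.getVert i.val

variable {c : G.Walk u u}

lemma IsCycle.neZero_length (hc : c.IsCycle) : NeZero c.length :=
  ⟨by have := hc.three_le_length; omega⟩

lemma cycleVert_natCast {n : ℕ} (hn : n ≤ c.length) : c.cycleVert n = c.getVert n := by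
  rw [cycleVert, ZMod.val_natCast]
  rcases hn.lt_or_eq with hn | rfl
  · rw [Nat.mod_eq_of_lt hn]
  · rw [Nat.mod_self, getVert_zero, getVert_length]

lemma exists_cycleVert_eq (hv : v ∈ c.support) : ∃ i, c.cycleVert i = v := by
  obtain ⟨n, rfl, hn⟩ := mem_support_iff_exists_getVert.mp hv
  exact ⟨n, cycleVert_natCast hn⟩

lemma exists_eq_mk_cycleVert {e : Sym2 V} (he : e ∈ c.edges) :
    ∃ i, e = s(c.cycleVert i, c.cycleVert (i + 1)) := by
  induction e using Sym2.ind with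
  | _ x y =>
    obtain ⟨n, hn, he⟩ := (c.mk_mem_edges_iff_exists).mp he
    refine ⟨n, ?_⟩
    rw [← he, cycleVert_natCast hn.le, ← Nat.cast_succ, cycleVert_natCast hn]

lemma mk_cycleVert_mem_edges [NeZero c.length] (i : ZMod c.length) :
    s(c.cycleVert i, c.cycleVert (i + 1)) ∈ c.edges := by
  rw [← ZMod.natCast_zmod_val i, ← Nat.cast_succ, cycleVert_natCast (ZMod.val_lt i).le,
    cycleVert_natCast (ZMod.val_lt i)]
  exact c.mk_mem_edges_iff_exists.mpr ⟨i.val, ZMod.val_lt i, rfl⟩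

lemma IsCycle.cycleVert_injective (hc : c.IsCycle) : Function.Injective c.cycleVert := by
  have := hc.neZero_length
  intro i j hij
  have hi := ZMod.val_lt i
  have hj := ZMod.val_lt j
  exact ZMod.val_injective _ (hc.getVert_injOn' (by simp; omega) (by simp; omega) hij)

lemma IsCycle.support_subset_of_edges_subset (hc : c.IsCycle) {c' : G.Walk u' u'}
    (hc' : c'.IsCycle) (hsub : ∀ e ∈ c'.edges, e ∈ c.edges) (hv : v ∈ c.support) :
    v ∈ c'.support := by
  have := hc.neZero_length
  have hinj := hc.cycleVert_injective
  -- the two `c'`-neighbours of a vertex lie among its two `c`-neighbours, so they are both of them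
  have hstep : ∀ i, c.cycleVert i ∈ c'.support → c.cycleVert (i + 1) ∈ c'.support := by
    intro i hi
    have hnbrs : c'.toSubgraph.neighborSet (c.cycleVert i) ⊆
        {c.cycleVert (i - 1), c.cycleVert (i + 1)} := by
      intro w hw
      obtain ⟨j, hj⟩ := exists_eq_mk_cycleVert (hsub _ (adj_toSubgraph_iff_mem_edges.mp hw))
      rcases Sym2.eq_iff.mp hj with ⟨hij, rfl⟩ | ⟨hij, rfl⟩
      · obtain rfl := hinj hij; simp
      · obtain rfl := hinj hij; simp
    have heq := Set.eq_of_subset_of_ncard_le hnbrs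
      ((Set.ncard_insert_le _ _).trans (by simp [hc'.ncard_neighborSet_toSubgraph_eq_two hi]))
    have hadj : c'.toSubgraph.Adj (c.cycleVert i) (c.cycleVert (i + 1)) := by
      change _ ∈ c'.toSubgraph.neighborSet _
      rw [heq]; simp
    exact mem_support_of_adj_toSubgraph hadj.symm
  obtain ⟨e, he⟩ := List.exists_mem_of_length_pos
    (by rw [length_edges]; exact hc'.three_le_length.trans_lt' (by norm_num))
  obtain ⟨j, rfl⟩ := exists_eq_mk_cycleVert (hsub e he)
  obtain ⟨i, rfl⟩ := exists_cycleVert_eq hv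
  exact ZMod.forall_of_add_one (c'.fst_mem_support_of_mem_edges he) hstep i

lemma IsCycle.card_support_toFinset [DecidableEq V] (hc : c.IsCycle) :
    #c.support.toFinset = c.length := by
  rw [← c.cons_tail_support, List.toFinset_cons,
    insert_eq_of_mem (List.mem_toFinset.mpr (c.end_mem_tail_support hc.not_nil)),
    List.toFinset_card_of_nodup hc.support_nodup, List.length_tail, length_support]
  rfl

lemma even_length_iff_of_forall_mem_edges (S : Set V) (p : G.Walk u v)
    (hp : ∀ x y, s(x, y) ∈ p.edges → (x ∈ S ↔ y ∉ S)) : Even p.length ↔ (u ∈ S ↔ v ∈ S) := by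
  induction p with
  | nil => simp
  | cons h q ih =>
    simp only [length_cons, Nat.even_add_one, edges_cons, List.mem_cons] at hp ⊢
    rw [ih fun x y hxy => hp x y (.inr hxy)]
    have := hp _ _ (.inl rfl)
    tauto

lemma exists_mk_mem_edges_of_odd_length {S : Finset V} {p : G.Walk u v}
    (hS : ∀ x ∈ S, ∀ y ∈ S, ¬ G.Adj x y) (hp : Odd p.length) (hu : u ∉ S) (hv : v ∉ S) :
    ∃ x y, s(x, y) ∈ p.edges ∧ x ∉ S ∧ y ∉ S := by
  by_contra! h
  have heven := (even_length_iff_of_forall_mem_edges (S : Set V) p fun x y hxy =>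
    ⟨fun hx hy => hS x hx y hy (p.adj_of_mem_edges hxy),
      fun hy => by_contra fun hx => hy (h x y hxy hx)⟩).mpr (by simp [hu, hv])
  exact Nat.not_even_iff_odd.mpr hp heven

end SimpleGraph.Walk

namespace TPerfection

variable {V : Type*}

lemma sum_le_of_mem_stabPolytope [Fintype V] [DecidableEq V] {G : SimpleGraph V} {m : ℝ}
    (h : ∀ S, IsStableSet G S → (#S : ℝ) ≤ m) {x : V → ℝ} (hx : x ∈ stabPolytope G) :
    ∑ v, x v ≤ m := by
  refine convexHull_min ?_ (convex_halfSpace_le ?_ m) hx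
  · rintro _ ⟨S, hS, rfl⟩
    simpa [sum_boole] using h S hS
  · exact ⟨fun y z => sum_add_distrib, fun r y => (mul_sum _ _ _).symm⟩

section Rim

variable {G : SimpleGraph V} {hub u : V} {c : G.Walk u u}

lemma two_mul_card_add_card_le_length [DecidableEq V] [NeZero c.length] {S : Finset V}
    (hS : IsStableSet G S) {J : Finset (ZMod c.length)}
    (hJ : ∀ j ∈ J, c.cycleVert j ∉ S ∧ c.cycleVert (j + 1) ∉ S) :
    2 * #{i | c.cycleVert i ∈ S} + #J ≤ c.length := by
  have := two_mul_card_add_card_le_card (T := {i | c.cycleVert i ∈ S}) (a := 1)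
    (fun i hi hi' => hS _ (mem_filter.mp hi).2 _ (mem_filter.mp hi').2
      (c.adj_of_mem_edges (Walk.mk_cycleVert_mem_edges i)))
    (fun j hj => by simpa using hJ j hj)
  rwa [ZMod.card] at this

lemma IsSegment.exists_cycleVert_notMem [NeZero c.length] {a b : V} {p : G.Walk a b}
    (hp : IsSegment G hub c p) (hodd : Odd p.length) {S : Finset V} (hS : IsStableSet G S)
    (hhub : hub ∈ S) :
    ∃ j, c.cycleVert j ∉ S ∧ c.cycleVert (j + 1) ∉ S ∧
      s(c.cycleVert j, c.cycleVert (j + 1)) ∈ p.edges := by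
  obtain ⟨x, y, hxy, hx, hy⟩ := p.exists_mk_mem_edges_of_odd_length hS hodd
    (fun ha => hS _ hhub _ ha hp.2.2.1) (fun hb => hS _ hhub _ hb hp.2.2.2.1)
  obtain ⟨j, hj⟩ := Walk.exists_eq_mk_cycleVert (hp.2.2.2.2.1 _ hxy)
  rcases Sym2.eq_iff.mp hj with ⟨rfl, rfl⟩ | ⟨rfl, rfl⟩
  · exact ⟨j, hx, hy, hj ▸ hxy⟩
  · exact ⟨j, hy, hx, hj ▸ hxy⟩

end Rim

section WheelPoint

variable [DecidableEq V] (hub : V) (k : ℕ)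

noncomputable def wheelPoint (v : V) : ℝ := if v = hub then 1 / k else (k - 1) / (2 * k)

variable {hub k}

lemma wheelPoint_nonneg (hk : 1 ≤ k) (v : V) : 0 ≤ wheelPoint hub k v := by
  have : (1 : ℝ) ≤ k := by exact_mod_cast hk
  unfold wheelPoint; split_ifs <;> positivity

lemma wheelPoint_le_half (hk : 2 ≤ k) (v : V) : wheelPoint hub k v ≤ 1 / 2 := by
  have : (2 : ℝ) ≤ k := by exact_mod_cast hk
  unfold wheelPoint
  split_ifs
  · exact one_div_le_one_div_of_le two_pos this
  · rw [div_le_div_iff₀ (by positivity) two_pos]; linarith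

lemma sum_wheelPoint_of_notMem {F : Finset V} (h : hub ∉ F) :
    ∑ v ∈ F, wheelPoint hub k v = #F * ((k - 1) / (2 * k)) := by
  have hrim : ∀ v ∈ F, wheelPoint hub k v = (k - 1) / (2 * k) :=
    fun v hv => if_neg (ne_of_mem_of_not_mem hv h)
  rw [sum_congr rfl hrim, sum_const, nsmul_eq_mul]

lemma sum_wheelPoint_of_mem {F : Finset V} (h : hub ∈ F) :
    ∑ v ∈ F, wheelPoint hub k v = 1 / k + (#F - 1) * ((k - 1) / (2 * k)) := by
  rw [← add_sum_erase _ _ h, sum_wheelPoint_of_notMem (notMem_erase _ _),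
    card_erase_of_mem h, Nat.cast_sub (card_pos.mpr ⟨_, h⟩), wheelPoint, if_pos rfl, Nat.cast_one]

end WheelPoint

namespace IsLooseWheel

variable [DecidableEq V] {G : SimpleGraph V} {hub u : V} {c : G.Walk u u}
  (hw : IsLooseWheel G hub c)
include hw

lemma card_eq_length_add_one [Fintype V] : Fintype.card V = c.length + 1 := by
  have huniv : (univ : Finset V) = insert hub c.support.toFinset := by
    ext v
    simpa [eq_comm, or_comm] using hw.vertex_cover v
  rw [← card_univ, huniv, card_insert_of_notMem (by simpa using hw.hub_not_mem),
    hw.isCycle.card_support_toFinset]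

lemma card_erase_hub_le [NeZero c.length] (S : Finset V) :
    #(S.erase hub) ≤ #{i | c.cycleVert i ∈ S} := by
  refine (card_le_card (t := ({i | c.cycleVert i ∈ S} : Finset _).image c.cycleVert)
    fun v hv => ?_).trans card_image_le
  obtain ⟨hne, hvS⟩ := mem_erase.mp hv
  obtain ⟨i, rfl⟩ := Walk.exists_cycleVert_eq ((hw.vertex_cover v).resolve_right hne)
  exact mem_image_of_mem _ (mem_filter.mpr ⟨mem_univ _, hvS⟩)

lemma two_mul_card_add_one_le_of_hub_notMem (hodd : Odd c.length) {S : Finset V}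
    (hS : IsStableSet G S) (hhub : hub ∉ S) : 2 * #S + 1 ≤ c.length := by
  have := hw.isCycle.neZero_length
  have hrim := two_mul_card_add_card_le_length (c := c) hS (J := ∅) (by simp)
  have hS' := hw.card_erase_hub_le S
  rw [erase_eq_of_notMem hhub] at hS'
  obtain ⟨m, hm⟩ := hodd
  omega

lemma two_mul_card_add_one_le_of_hub_mem [NeZero c.length]
    {a₁ b₁ a₂ b₂ a₃ b₃ : V} {p₁ : G.Walk a₁ b₁} {p₂ : G.Walk a₂ b₂} {p₃ : G.Walk a₃ b₃}
    (hs₁ : IsSegment G hub c p₁) (hs₂ : IsSegment G hub c p₂) (hs₃ : IsSegment G hub c p₃)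
    (ho₁ : Odd p₁.length) (ho₂ : Odd p₂.length) (ho₃ : Odd p₃.length)
    (hd₁₂ : Disjoint p₁.edges.toFinset p₂.edges.toFinset)
    (hd₁₃ : Disjoint p₁.edges.toFinset p₃.edges.toFinset)
    (hd₂₃ : Disjoint p₂.edges.toFinset p₃.edges.toFinset)
    {S : Finset V} (hS : IsStableSet G S) (hhub : hub ∈ S) : 2 * #S + 1 ≤ c.length := by
  obtain ⟨j₁, hj₁, hj₁', he₁⟩ := hs₁.exists_cycleVert_notMem ho₁ hS hhub
  obtain ⟨j₂, hj₂, hj₂', he₂⟩ := hs₂.exists_cycleVert_notMem ho₂ hS hhub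
  obtain ⟨j₃, hj₃, hj₃', he₃⟩ := hs₃.exists_cycleVert_notMem ho₃ hS hhub
  have hne : ∀ {a b a' b' : V} {p : G.Walk a b} {p' : G.Walk a' b'} {j j'},
      Disjoint p.edges.toFinset p'.edges.toFinset →
      s(c.cycleVert j, c.cycleVert (j + 1)) ∈ p.edges →
      s(c.cycleVert j', c.cycleVert (j' + 1)) ∈ p'.edges → j ≠ j' := by
    rintro _ _ _ _ _ _ j j' hd he he' rfl
    exact disjoint_left.mp hd (List.mem_toFinset.mpr he) (List.mem_toFinset.mpr he')
  have hJ : #{j₁, j₂, j₃} = 3 :=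
    card_eq_three.mpr ⟨j₁, j₂, j₃, hne hd₁₂ he₁ he₂, hne hd₁₃ he₁ he₃, hne hd₂₃ he₂ he₃, rfl⟩
  have hrim := two_mul_card_add_card_le_length hS (J := {j₁, j₂, j₃}) (by aesop)
  have hS' := hw.card_erase_hub_le S
  have := card_erase_add_one hhub
  omega

lemma le_length_of_hub_notMem {v : V} {c' : G.Walk v v} (hc' : c'.IsCycle)
    (hhub : hub ∉ c'.support) : c.length ≤ c'.length := by
  have hsub : ∀ e ∈ c'.edges, e ∈ c.edges := by
    intro e he
    induction e using Sym2.ind with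
    | _ x y =>
      have hx := c'.fst_mem_support_of_mem_edges he
      have hy := c'.snd_mem_support_of_mem_edges he
      rcases hw.edge_cover x y (c'.adj_of_mem_edges he) with h | rfl | rfl
      exacts [h, absurd hx hhub, absurd hy hhub]
  rw [← hw.isCycle.card_support_toFinset, ← hc'.card_support_toFinset]
  exact card_le_card fun x hx => List.mem_toFinset.mpr
    (hw.isCycle.support_subset_of_edges_subset hc' hsub (List.mem_toFinset.mp hx))

lemma wheelPoint_mem_tPolytope : wheelPoint hub c.length ∈ tPolytope G := by
  have hk := hw.isCycle.three_le_length
  have hK : (0 : ℝ) < c.length := by positivity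
  have hhalf := wheelPoint_le_half (hub := hub) (k := c.length) (by omega)
  refine ⟨fun v => ⟨wheelPoint_nonneg (by omega) v, (hhalf v).trans (by norm_num)⟩,
    fun v w _ => by linarith [hhalf v, hhalf w], ?_⟩
  intro v c' hc' _
  by_cases hhub : hub ∈ c'.support.toFinset
  · have hL : (3 : ℝ) ≤ c'.length := by exact_mod_cast hc'.1.three_le_length
    rw [sum_wheelPoint_of_mem hhub, hc'.1.card_support_toFinset]
    have hslack : ((c'.length : ℝ) - 1) / 2 - (1 / c.length + (c'.length - 1) *
        ((c.length - 1) / (2 * c.length))) = (c'.length - 3) / (2 * c.length) := by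
      field_simp; ring
    linarith [div_nonneg (sub_nonneg.mpr hL) (by positivity : (0 : ℝ) ≤ 2 * c.length)]
  · have hL : (c.length : ℝ) ≤ c'.length := by
      exact_mod_cast hw.le_length_of_hub_notMem hc'.1 (by simpa using hhub)
    rw [sum_wheelPoint_of_notMem hhub, hc'.1.card_support_toFinset]
    have hslack : ((c'.length : ℝ) - 1) / 2 - c'.length * ((c.length - 1) / (2 * c.length)) =
        (c'.length - c.length) / (2 * c.length) := by
      field_simp; ring
    linarith [div_nonneg (sub_nonneg.mpr hL) (by positivity : (0 : ℝ) ≤ 2 * c.length)]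

lemma sum_wheelPoint [Fintype V] :
    ∑ v, wheelPoint hub c.length v = 1 / c.length + (c.length - 1) / 2 := by
  have hk : (c.length : ℝ) ≠ 0 := by
    have := hw.isCycle.three_le_length; positivity
  rw [sum_wheelPoint_of_mem (mem_univ hub), card_univ, hw.card_eq_length_add_one]
  push_cast
  field_simp
  ring

end IsLooseWheel

/-- Every loose odd wheel is not t-perfect. -/
theorem looseOddWheel_not_tPerfect {V : Type*} [Fintype V] [DecidableEq V]
    (G : SimpleGraph V) (h : IsLooseOddWheel G) :
    ¬ TPerfect G := by
  obtain ⟨hub, u, c, hw, hodd, a₁, b₁, p₁, a₂, b₂, p₂, a₃, b₃, p₃,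
    hs₁, hs₂, hs₃, ho₁, ho₂, ho₃, hd₁₂, hd₁₃, hd₂₃⟩ := h
  intro hTP
  have := hw.isCycle.neZero_length
  have hstab : ∀ S, IsStableSet G S → (#S : ℝ) ≤ (c.length - 1) / 2 := fun S hS => by
    have : 2 * #S + 1 ≤ c.length := by
      by_cases hhub : hub ∈ S
      · exact hw.two_mul_card_add_one_le_of_hub_mem hs₁ hs₂ hs₃ ho₁ ho₂ ho₃ hd₁₂ hd₁₃ hd₂₃ hS hhub
      · exact hw.two_mul_card_add_one_le_of_hub_notMem hodd hS hhub
    have : (2 * #S + 1 : ℝ) ≤ c.length := by exact_mod_cast this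
    linarith
  have hsum := sum_le_of_mem_stabPolytope hstab (hTP ▸ hw.wheelPoint_mem_tPolytope)
  rw [hw.sum_wheelPoint] at hsum
  have : (0 : ℝ) < 1 / c.length := by have := hw.isCycle.three_le_length; positivity
  linarith

end TPerfection
end

section
/- Every perfect finite simple graph is h-perfect. -/
/-!
Stable sets satisfy the clique and odd-cycle inequalities, and these inequalities cut out a convex
set, so `STAB(G) ⊆ hPolytope G ⊆ QSTAB(G)`.

For the converse, let `G` be perfect. Every `w : V → ℕ` whose weight on each clique is at most
`N` is the sum of the indicators of `N` stable sets. For 0/1 weights these are the colour classes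
of an `N`-colouring of the subgraph induced by the support of `w`. Otherwise lower `w` by one at a
vertex `v₀` of weight at least two and colour by induction: the colour class through `v₀` meets
every clique of weight `N` (a clique avoiding `v₀` has the same weight before and after, and can
only reach `N` by meeting all `N` classes), so removing it from `w` leaves clique weights at most
`N - 1`. Hence `w / N ∈ STAB(G)`, and the approximations `⌊N x⌋₊ / N → x` put all of `QSTAB(G)`
into the closed set `STAB(G)`.
-/

open Finset SimpleGraph

namespace TPerfection

variable {V : Type*}

section StablePolytope

variable [DecidableEq V] {G : SimpleGraph V}

theorem IsStableSet.card_inter_le_one {S K : Finset V} (hS : IsStableSet G S)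
    (hK : G.IsClique (K : Set V)) : #(K ∩ S) ≤ 1 := by
  rw [Finset.card_le_one]
  intro a ha b hb
  rw [Finset.mem_inter] at ha hb
  by_contra hne
  exact hS a ha.2 b hb.2 (hK ha.1 hb.1 hne)

/-- Each edge of the cycle has at most one end in `S`, and each vertex of the cycle is an end
of two of its edges. -/
theorem IsStableSet.two_mul_card_inter_support_le {S : Finset V}
    (hS : IsStableSet G S) {u : V} {c : G.Walk u u} (hc : c.IsCycle) :
    2 * #(c.support.toFinset ∩ S) ≤ c.length := by
  have hcard : #(c.support.toFinset ∩ S) = c.support.tail.countP (· ∈ S) := by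
    have hu : u ∈ c.support.tail := c.end_mem_tail_support hc.not_nil
    rw [← c.cons_tail_support, List.toFinset_cons, List.tail_cons,
      Finset.insert_eq_of_mem (List.mem_toFinset.2 hu),
      ← Finset.filter_mem_eq_inter, List.countP_eq_length_filter,
      ← List.toFinset_card_of_nodup (hc.support_nodup.filter _), List.toFinset_filter]
    simp
  have hfst : c.support.tail.countP (· ∈ S) = c.darts.countP (·.fst ∈ S) := by
    rw [c.tail_support_perm_dropLast_support.countP_eq, ← c.map_fst_darts, List.countP_map]
    rfl
  have hsnd : c.support.tail.countP (· ∈ S) = c.darts.countP (·.snd ∈ S) := by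
    rw [← c.map_snd_darts, List.countP_map]
    rfl
  have hdisj : c.darts.countP (·.snd ∈ S) ≤ c.darts.countP (fun d => d.fst ∉ S) :=
    List.countP_mono_left fun d _ hd => by
      simpa using fun hd' => hS _ hd' _ (by simpa using hd) d.adj
  have hsplit := c.darts.length_eq_countP_add_countP (·.fst ∈ S)
  simp only [decide_eq_true_eq, c.length_darts] at hsplit
  omega

theorem hPolytope_subset_qstabPolytope : hPolytope G ⊆ qstabPolytope G :=
  fun _ hx => ⟨hx.1, hx.2.1⟩

theorem convex_hPolytope : Convex ℝ (hPolytope G) := by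
  have hsum (s : Finset V) (r : ℝ) : Convex ℝ {x : V → ℝ | ∑ v ∈ s, x v ≤ r} :=
    convex_halfSpace_le ⟨fun x y => by simp [Finset.sum_add_distrib],
      fun a x => by simp [Finset.mul_sum]⟩ r
  rintro x ⟨hxb, hxc, hxo⟩ y ⟨hyb, hyc, hyo⟩ a b ha hb hab
  refine ⟨fun v => ⟨?_, ?_⟩, fun K hK => ?_, fun u c hc hodd => ?_⟩
  · exact convex_halfSpace_ge (f := fun x : V → ℝ => x v) (LinearMap.proj v).isLinear 0
      (hxb v).1 (hyb v).1 ha hb hab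
  · exact convex_halfSpace_le (f := fun x : V → ℝ => x v) (LinearMap.proj v).isLinear 1
      (hxb v).2 (hyb v).2 ha hb hab
  · exact hsum K 1 (hxc K hK) (hyc K hK) ha hb hab
  · exact hsum _ _ (hxo u c hc hodd) (hyo u c hc hodd) ha hb hab

theorem IsStableSet.indicator_mem_hPolytope {S : Finset V}
    (hS : IsStableSet G S) : (fun v => if v ∈ S then (1 : ℝ) else 0) ∈ hPolytope G := by
  refine ⟨fun v => ?_, fun K hK => ?_, fun u c hc hodd => ?_⟩
  · by_cases hv : v ∈ S <;> simp [hv]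
  · rw [Finset.sum_boole, Finset.filter_mem_eq_inter]
    exact_mod_cast hS.card_inter_le_one hK
  · rw [Finset.sum_boole, Finset.filter_mem_eq_inter, le_div_iff₀ two_pos]
    have hle : 2 * #(c.support.toFinset ∩ S) + 1 ≤ c.length := by
      have := hS.two_mul_card_inter_support_le hc.1
      obtain ⟨k, hk⟩ := hodd
      omega
    have := (Nat.cast_le (α := ℝ)).2 hle
    push_cast at this
    linarith

theorem stabPolytope_subset_hPolytope [Fintype V] :
    stabPolytope G ⊆ hPolytope G :=
  convexHull_min (by rintro _ ⟨S, hS, rfl⟩; exact hS.indicator_mem_hPolytope) convex_hPolytope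

end StablePolytope

section WeightedColoring

variable [DecidableEq V] {G : SimpleGraph V} {w : V → ℕ} {N : ℕ}

structure IsWeightedColoring (G : SimpleGraph V) (w : V → ℕ) (F : Fin N → Finset V) : Prop where
  isStableSet : ∀ i, IsStableSet G (F i)
  card_mem : ∀ v, #{i | v ∈ F i} = w v

namespace IsWeightedColoring

variable {F : Fin N → Finset V}

theorem exists_mem (hF : IsWeightedColoring G w F) {v : V} (hv : w v ≠ 0) : ∃ i, v ∈ F i := by
  obtain ⟨i, hi⟩ := Finset.card_pos.1 ((hF.card_mem v).symm ▸ Nat.pos_of_ne_zero hv)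
  exact ⟨i, (Finset.mem_filter.1 hi).2⟩

theorem one_le_of_mem (hF : IsWeightedColoring G w F) {v : V} {i : Fin N} (hv : v ∈ F i) :
    1 ≤ w v :=
  hF.card_mem v ▸ Finset.card_pos.2 ⟨i, Finset.mem_filter.2 ⟨Finset.mem_univ i, hv⟩⟩

theorem cons {A : Finset V} (hA : IsStableSet G A) (hF : IsWeightedColoring G w F) :
    IsWeightedColoring G (fun v => (if v ∈ A then 1 else 0) + w v)
      (Fin.cons A F : Fin (N + 1) → Finset V) where
  isStableSet := Fin.cases hA hF.isStableSet
  card_mem v := by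
    rw [Finset.card_filter, Fin.sum_univ_succ, ← hF.card_mem v, Finset.card_filter]
    simp

theorem sum_le_of_disjoint {F : Fin (N + 1) → Finset V} (hF : IsWeightedColoring G w F)
    {K : Finset V} (hK : G.IsClique (K : Set V)) {j : Fin (N + 1)} (hKj : Disjoint K (F j)) :
    ∑ v ∈ K, w v ≤ N :=
  calc ∑ v ∈ K, w v = ∑ i, #(K ∩ F i) := by
        simp_rw [← hF.card_mem, Finset.card_filter, ← Finset.filter_mem_eq_inter,
          Finset.card_filter]
        exact Finset.sum_comm
    _ ≤ ∑ i, if i = j then 0 else 1 := Finset.sum_le_sum fun i _ => by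
        split_ifs with h
        · simp [h, Finset.disjoint_iff_inter_eq_empty.1 hKj]
        · exact (hF.isStableSet i).card_inter_le_one hK
    _ = N := by simp [Finset.sum_ite, Finset.filter_ne']

theorem sum_sub_le {M : ℕ} {v₀ : V} {F : Fin (M + 1) → Finset V}
    (hF : IsWeightedColoring G (fun v => w v - if v = v₀ then 1 else 0) F) {j : Fin (M + 1)}
    (hj : v₀ ∈ F j) (hwK : ∀ K : Finset V, G.IsClique (K : Set V) → ∑ v ∈ K, w v ≤ M + 1)
    {K : Finset V} (hK : G.IsClique (K : Set V)) :
    ∑ v ∈ K, (w v - if v ∈ F j then 1 else 0) ≤ M := by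
  by_cases hKj : Disjoint K (F j)
  · have hv₀K : v₀ ∉ K := Finset.disjoint_right.1 hKj hj
    calc ∑ v ∈ K, (w v - if v ∈ F j then 1 else 0)
        = ∑ v ∈ K, (w v - if v = v₀ then 1 else 0) := Finset.sum_congr rfl fun v hv => by
          simp [Finset.disjoint_left.1 hKj hv, ne_of_mem_of_not_mem hv hv₀K]
      _ ≤ M := hF.sum_le_of_disjoint hK hKj
  · obtain ⟨a, haK, haj⟩ := Finset.not_disjoint_iff.1 hKj
    have ha : 1 ≤ w a := (hF.one_le_of_mem haj).trans (Nat.sub_le _ _)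
    have hlt : ∑ v ∈ K, (w v - if v ∈ F j then 1 else 0) < ∑ v ∈ K, w v :=
      Finset.sum_lt_sum (fun v _ => Nat.sub_le _ _) ⟨a, haK, by rw [if_pos haj]; omega⟩
    exact Nat.le_of_lt_succ (hlt.trans_le (hwK K hK))

end IsWeightedColoring

end WeightedColoring

section Perfect

variable [Fintype V] [DecidableEq V] {G : SimpleGraph V} {N : ℕ}

theorem isWeightedColoring_of_coloring {s : Set V} [DecidablePred (· ∈ s)]
    (C : (G.induce s).Coloring (Fin N)) :
    IsWeightedColoring G (fun v => if v ∈ s then 1 else 0)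
      (fun i => {v | ∃ h : v ∈ s, C ⟨v, h⟩ = i}) where
  isStableSet i x hx y hy hxy := by
    obtain ⟨hxs, rfl⟩ := (Finset.mem_filter.1 hx).2
    obtain ⟨hys, hyx⟩ := (Finset.mem_filter.1 hy).2
    exact C.valid (show (G.induce s).Adj ⟨x, hxs⟩ ⟨y, hys⟩ from hxy) hyx.symm
  card_mem v := by
    split_ifs with hv
    · simp [hv, Finset.filter_eq]
    · simp [hv]

theorem IsPerfect.exists_isWeightedColoring_of_le_one (hG : IsPerfect G) {w : V → ℕ}
    (hw : ∀ v, w v ≤ 1) (hwK : ∀ K : Finset V, G.IsClique (K : Set V) → ∑ v ∈ K, w v ≤ N) :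
    ∃ F : Fin N → Finset V, IsWeightedColoring G w F := by
  set s : Set V := {v | w v = 1}
  have hws : w = fun v => if v ∈ s then 1 else 0 := by
    funext v
    split_ifs with hv
    · exact hv
    · have : w v ≠ 1 := hv
      have := hw v
      omega
  have hclique : cliqueNumber (G.induce s) ≤ N := by
    refine sSup_le ?_
    rintro _ ⟨n, ⟨K, hK⟩, rfl⟩
    rw [isNClique_induce_iff] at hK
    have hKw : ∑ v ∈ K.map (.subtype _), w v = n := by
      rw [Finset.sum_map, ← hK.card_eq, Finset.card_map, Finset.card_eq_sum_ones]
      exact Finset.sum_congr rfl fun v _ => v.2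
    exact Nat.cast_le.2 (hKw ▸ hwK _ hK.isClique)
  obtain ⟨C⟩ : (G.induce s).Colorable N := by
    rw [← chromaticNumber_le_iff_colorable, hG s]
    exact hclique
  rw [hws]
  exact ⟨_, isWeightedColoring_of_coloring C⟩

theorem IsPerfect.exists_isWeightedColoring (hG : IsPerfect G) (w : V → ℕ) (N : ℕ)
    (hwK : ∀ K : Finset V, G.IsClique (K : Set V) → ∑ v ∈ K, w v ≤ N) :
    ∃ F : Fin N → Finset V, IsWeightedColoring G w F := by
  induction hn : ∑ v, w v using Nat.strong_induction_on generalizing w N with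
  | _ n ih =>
  by_cases hw : ∀ v, w v ≤ 1
  · exact hG.exists_isWeightedColoring_of_le_one hw hwK
  obtain ⟨v₀, hv₀⟩ := not_forall.1 hw
  obtain ⟨M, rfl⟩ : ∃ M, N = M + 1 := by
    have := hwK {v₀} (by simp)
    exact Nat.exists_eq_add_one.2 (by rw [Finset.sum_singleton] at this; omega)
  obtain ⟨F, hF⟩ := ih _ (hn ▸ Finset.sum_lt_sum (fun v _ => Nat.sub_le _ _)
      ⟨v₀, Finset.mem_univ _, by rw [if_pos rfl]; omega⟩)
    (fun v => w v - if v = v₀ then 1 else 0) (M + 1)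
    (fun K hK => (Finset.sum_le_sum fun v _ => Nat.sub_le _ _).trans (hwK K hK)) rfl
  obtain ⟨j, hj⟩ := hF.exists_mem (v := v₀) (by simp only [if_pos]; omega)
  have hjw : ∀ v ∈ F j, 1 ≤ w v := fun v hv => (hF.one_le_of_mem hv).trans (Nat.sub_le _ _)
  obtain ⟨H, hH⟩ := ih _ (hn ▸ Finset.sum_lt_sum (fun v _ => Nat.sub_le _ _)
      ⟨v₀, Finset.mem_univ _, by rw [if_pos hj]; omega⟩)
    (fun v => w v - if v ∈ F j then 1 else 0) M
    (fun K hK => hF.sum_sub_le hj hwK hK) rfl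
  have hw : (fun v => (if v ∈ F j then 1 else 0) + (w v - if v ∈ F j then 1 else 0)) = w := by
    funext v
    by_cases hv : v ∈ F j
    · simp [hv, hjw v hv]
    · simp [hv]
  exact ⟨Fin.cons (F j) H, hw ▸ hH.cons (hF.isStableSet j)⟩

end Perfect

section Polytope

variable [Fintype V] [DecidableEq V] {G : SimpleGraph V}

theorem isClosed_stabPolytope : IsClosed (stabPolytope G) := by
  refine Set.Finite.isClosed_convexHull ℝ ((Set.finite_range
    fun S : Finset V => fun v => if v ∈ S then (1 : ℝ) else 0).subset ?_)
  rintro _ ⟨S, -, rfl⟩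
  exact ⟨S, rfl⟩

theorem IsPerfect.div_mem_stabPolytope (hG : IsPerfect G) {w : V → ℕ} {N : ℕ} (hN : 0 < N)
    (hwK : ∀ K : Finset V, G.IsClique (K : Set V) → ∑ v ∈ K, w v ≤ N) :
    (fun v => (w v : ℝ) / N) ∈ stabPolytope G := by
  obtain ⟨F, hF⟩ := hG.exists_isWeightedColoring w N hwK
  have hmean : (fun v => (w v : ℝ) / N)
      = ∑ i, (1 / N : ℝ) • fun v => if v ∈ F i then (1 : ℝ) else 0 := by
    funext v
    simp only [Finset.sum_apply, Pi.smul_apply, smul_eq_mul, ← Finset.mul_sum, Finset.sum_boole,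
      hF.card_mem v]
    ring
  rw [hmean]
  refine (convex_convexHull ℝ _).sum_mem (fun _ _ => by positivity) ?_
    fun i _ => subset_convexHull ℝ _ ⟨F i, hF.isStableSet i, rfl⟩
  simp [hN.ne']

theorem IsPerfect.qstabPolytope_subset_stabPolytope (hG : IsPerfect G) :
    qstabPolytope G ⊆ stabPolytope G := by
  rintro x ⟨hbox, hclique⟩
  have hfloor (N : ℕ) (hN : 0 < N) :
      (fun v => (⌊x v * N⌋₊ : ℝ) / N) ∈ stabPolytope G := by
    refine hG.div_mem_stabPolytope hN fun K hK => ?_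
    have hsum : ∑ v ∈ K, (⌊x v * N⌋₊ : ℝ) ≤ N :=
      calc ∑ v ∈ K, (⌊x v * N⌋₊ : ℝ) ≤ ∑ v ∈ K, x v * N :=
            Finset.sum_le_sum fun v _ => Nat.floor_le (by have := (hbox v).1; positivity)
        _ = (∑ v ∈ K, x v) * N := (Finset.sum_mul ..).symm
        _ ≤ N := mul_le_of_le_one_left (Nat.cast_nonneg N) (hclique K hK)
    exact_mod_cast hsum
  have hlim : Filter.Tendsto (fun N : ℕ => fun v => (⌊x v * N⌋₊ : ℝ) / N) Filter.atTop (nhds x) :=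
    tendsto_pi_nhds.2 fun v =>
      (tendsto_nat_floor_mul_div_atTop (hbox v).1).comp tendsto_natCast_atTop_atTop
  exact isClosed_stabPolytope.mem_of_tendsto hlim
    (Filter.eventually_atTop.2 ⟨1, fun N hN => hfloor N hN⟩)

end Polytope

/-- Every perfect finite simple graph is h-perfect. -/
theorem hPerfect_of_isPerfect {V : Type*} [Fintype V] [DecidableEq V]
    (G : SimpleGraph V) (h : IsPerfect G) :
    HPerfect G :=
  (hPolytope_subset_qstabPolytope.trans h.qstabPolytope_subset_stabPolytope).antisymm
    stabPolytope_subset_hPolytope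

end TPerfection
end
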